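/- In the grid-like frame G, the predicate mid₂(u) := ∃s t, u R₂ s ∧ s R₂ t holds exactly for the worlds u = U(x,y) with x+y even, and mid₁(u) := ∃s t, u R₁ s ∧ s R₁ t holds exactly for the worlds u = U(x,y) with x+y odd. -/

import Mathlib

inductive GW : Type where
  | P : ℤ → ℤ → GW
  | U : ℤ → ℤ → GW
  | S : ℤ → ℤ → GW
  | T : ℤ → ℤ → GW
deriving DecidableEq

def Apairs (x y : ℤ) (a b : GW) : Prop :=
  (a = .P x y ∧ b = .P (x+1) y) ∨ (a = .P x y ∧ b = .P x (y+1)) ∨ (a = .P x y ∧ b = .U x y)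

def Bpairs (x y : ℤ) (a b : GW) : Prop :=
  (a = .U x y ∧ b = .P (x+1) (y+1)) ∨ (a = .U x y ∧ b = .S x y) ∨
  (a = .S x y ∧ b = .T x y) ∨ (a = .U x y ∧ b = .T x y) ∨
  (a = .P (x+1) y ∧ b = .P (x+1) (y+1)) ∨ (a = .P x (y+1) ∧ b = .P (x+1) (y+1))

/-- R₁ of the grid-like frame G. -/
def R1 (a b : GW) : Prop :=
  ∃ x y : ℤ, (Even (x+y) ∧ Apairs x y a b) ∨ (¬ Even (x+y) ∧ Bpairs x y a b)

/-- R₂ of the grid-like frame G. -/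
def R2 (a b : GW) : Prop :=
  ∃ x y : ℤ, (Even (x+y) ∧ Bpairs x y a b) ∨ (¬ Even (x+y) ∧ Apairs x y a b)

/-!
Every edge out of `P x y` stays inside the square `(x, y)` and exists only when that square
carries the `Apairs` edges; its targets `P (x+1) y`, `P x (y+1)`, `U x y` are then dead ends,
since the neighbouring squares have the other colour. `T` is a dead end and `S` only sees `T`,
so the only two-step paths are `U → S → T` in a square carrying the `Bpairs` edges.
-/

/-- The relations `R₁` and `R₂` differ only in which checkerboard colour carries the `Apairs`
edges; `gridRel E` is the relation in which the squares satisfying `E` do. -/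
def gridRel (E : ℤ → ℤ → Prop) (a b : GW) : Prop :=
  ∃ x y : ℤ, (E x y ∧ Apairs x y a b) ∨ (¬ E x y ∧ Bpairs x y a b)

theorem R2_eq_gridRel : R2 = gridRel fun x y => ¬ Even (x + y) := by
  ext a b
  simp only [R2, gridRel, not_not, or_comm]

namespace gridRel

variable {E : ℤ → ℤ → Prop}

theorem not_T_left (x y : ℤ) (b : GW) : ¬ gridRel E (.T x y) b := by
  rintro ⟨x', y', ⟨-, h⟩ | ⟨-, h⟩⟩ <;> simp [Apairs, Bpairs] at h

theorem eq_T_of_S_left {x y : ℤ} {b : GW} (h : gridRel E (.S x y) b) : b = .T x y := by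
  obtain ⟨x', y', ⟨-, h⟩ | ⟨-, h⟩⟩ := h <;> simp only [Apairs, Bpairs] at h <;> grind

theorem not_of_U_left {x y : ℤ} {b : GW} (h : gridRel E (.U x y) b) : ¬ E x y := by
  obtain ⟨x', y', ⟨-, h⟩ | ⟨hE, h⟩⟩ := h <;> simp only [Apairs, Bpairs] at h <;> grind

theorem U_S {x y : ℤ} (hE : ¬ E x y) : gridRel E (.U x y) (.S x y) :=
  ⟨x, y, .inr ⟨hE, .inr (.inl ⟨rfl, rfl⟩)⟩⟩

theorem S_T {x y : ℤ} (hE : ¬ E x y) : gridRel E (.S x y) (.T x y) :=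
  ⟨x, y, .inr ⟨hE, .inr (.inr (.inl ⟨rfl, rfl⟩))⟩⟩

section Checkerboard

variable (hx : ∀ x y, E (x + 1) y ↔ ¬ E x y) (hy : ∀ x y, E x (y + 1) ↔ ¬ E x y)
include hx hy

/-- The `Bpairs` edges between `P`-worlds of a square of the other colour start at a corner
of this colour, so all edges out of `P x y` belong to the square `(x, y)`. -/
theorem of_P_left {x y : ℤ} {b : GW} (h : gridRel E (.P x y) b) :
    E x y ∧ (b = .P (x + 1) y ∨ b = .P x (y + 1) ∨ b = .U x y) := by
  obtain ⟨x', y', ⟨hE, h⟩ | ⟨hE, h⟩⟩ := h <;> simp only [Apairs, Bpairs] at h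
  · grind
  · rcases h with ⟨h, -⟩ | ⟨h, -⟩ | ⟨h, -⟩ | ⟨h, -⟩ | ⟨h, hb⟩ | ⟨h, hb⟩ <;> cases h
    · exact ⟨(hx _ _).2 hE, .inr (.inl hb)⟩
    · exact ⟨(hy _ _).2 hE, .inl hb⟩

theorem two_step_iff (u : GW) :
    (∃ s t, gridRel E u s ∧ gridRel E s t) ↔ ∃ x y, u = .U x y ∧ ¬ E x y := by
  constructor
  · rintro ⟨s, t, hus, hst⟩
    cases u with
    | P x y =>
      obtain ⟨hE, rfl | rfl | rfl⟩ := of_P_left hx hy hus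
      · exact absurd ((hx x y).1 (of_P_left hx hy hst).1) (not_not.2 hE)
      · exact absurd ((hy x y).1 (of_P_left hx hy hst).1) (not_not.2 hE)
      · exact absurd hE (not_of_U_left hst)
    | U x y => exact ⟨x, y, rfl, not_of_U_left hus⟩
    | S x y => exact absurd (eq_T_of_S_left hus ▸ hst) (not_T_left x y t)
    | T x y => exact absurd hus (not_T_left x y s)
  · rintro ⟨x, y, rfl, hE⟩
    exact ⟨_, _, U_S hE, S_T hE⟩

end Checkerboard

end gridRel

theorem grid_mid_characterization :
    (∀ u : GW, (∃ s t : GW, R2 u s ∧ R2 s t) ↔ ∃ x y : ℤ, u = .U x y ∧ Even (x + y)) ∧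
    (∀ u : GW, (∃ s t : GW, R1 u s ∧ R1 s t) ↔ ∃ x y : ℤ, u = .U x y ∧ ¬ Even (x + y)) := by
  have even_succ_left (x y : ℤ) : Even (x + 1 + y) ↔ ¬ Even (x + y) := by
    rw [add_right_comm, Int.even_add_one]
  have even_succ_right (x y : ℤ) : Even (x + (y + 1)) ↔ ¬ Even (x + y) := by
    rw [← add_assoc, Int.even_add_one]
  refine ⟨fun u => ?_, fun u => ?_⟩
  · rw [R2_eq_gridRel, gridRel.two_step_iff (E := fun x y => ¬ Even (x + y))
      (not_congr <| even_succ_left · ·) (not_congr <| even_succ_right · ·)]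
    simp only [not_not]
  · exact gridRel.two_step_iff (E := fun x y => Even (x + y)) even_succ_left even_succ_right u
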